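/- (Lemma 3.1, hypergeometric identities.) For all integers ℓ ≥ 1 and k ≥ 0: Σ_{m=1}^{ℓ} (m/ℓ)·C(2ℓ, ℓ−m)·p_k(m) = C(ℓ−1,k)·C(2ℓ−1,ℓ) and Σ_{m=1}^{ℓ} (m/ℓ)·C(2ℓ, ℓ−m)·q_k(m) = C(ℓ,k)·C(2ℓ−1,ℓ), where all C(·,·) are ordinary binomial coefficients; equivalently, Σ_{m=0}^{ℓ} A_{ℓ,m}·p_k(m) = C(ℓ−1,k)·C(2ℓ−1,ℓ) and Σ_{m=0}^{ℓ} A_{ℓ,m}·q_k(m) = C(ℓ,k)·C(2ℓ−1,ℓ) with A_{ℓ,m} := (2m/2ℓ)·C(2ℓ, ℓ−m). -/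

import Mathlib

/-- Generalized binomial coefficient `binom(x,k) = x(x-1)⋯(x-k+1)/k!`. -/
def qbinom (x : ℚ) (k : ℕ) : ℚ := (∏ i ∈ Finset.range k, (x - i)) / (Nat.factorial k)

/-- `p_k(m) = binom(m-1,k)·binom(m+k,k)`. -/
def pPoly (k : ℕ) (m : ℚ) : ℚ := qbinom (m - 1) k * qbinom (m + k) k

/-- `q_k(m) = binom(m,k)·binom(m+k-1,k)`. -/
def qPoly (k : ℕ) (m : ℚ) : ℚ := qbinom m k * qbinom (m + k - 1) k

/-!
Put `Q_{s,j}(x) = binom(x - s, j) * binom(x + j - 1, j)`, so that `q_k = Q_{0,k}`. Its backward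
difference is `Q_{s,j+1}(x) - Q_{s,j+1}(x - 1) = (2x - s - 1)/(j + 1) * Q_{s+1,j}(x)`, while for
`s + n = 2ℓ` the weight `(2m - s) * C(n, ℓ - m)` is `n` times the difference
`C(n - 1, ℓ - m) - C(n - 1, ℓ - m - 1)`. Summation by parts therefore trades `(s, n, j)` for
`(s + 1, n - 1, j - 1)`, and induction on `j` gives
`∑_{m=1}^{ℓ} (2m - s) C(n, ℓ - m) Q_{s,j}(m) = n C(n - 1, j) C(n - 1 - j, ℓ - 1)`.
At `s = 0`, `n = 2ℓ` this is the identity for `q_k`; the one for `p_k` follows from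
`q_{k+1} = p_{k+1} + p_k` and Pascal's rule.
-/

open Finset

lemma qbinom_zero_right (x : ℚ) : qbinom x 0 = 1 := by simp [qbinom]

lemma qbinom_succ (x : ℚ) (k : ℕ) : qbinom x (k + 1) = qbinom x k * (x - k) / (k + 1) := by
  rw [qbinom, qbinom, prod_range_succ, Nat.factorial_succ]
  push_cast
  field_simp

lemma qbinom_succ_eq_mul_qbinom_sub_one (x : ℚ) (k : ℕ) :
    qbinom x (k + 1) = x * qbinom (x - 1) k / (k + 1) := by
  rw [qbinom, qbinom, prod_range_succ', Nat.factorial_succ]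
  push_cast
  simp_rw [sub_add_eq_sub_sub_swap]
  field_simp
  ring

lemma qbinom_natCast_of_lt {m k : ℕ} (h : m < k) : qbinom m k = 0 := by
  rw [qbinom, prod_eq_zero (mem_range.mpr h) (sub_self _), zero_div]

lemma pPoly_zero : pPoly 0 = qPoly 0 := by
  funext x
  simp only [pPoly, qPoly, qbinom_zero_right]

lemma qPoly_succ (k : ℕ) (x : ℚ) : qPoly (k + 1) x = pPoly (k + 1) x + pPoly k x := by
  have h₁ := qbinom_succ_eq_mul_qbinom_sub_one x k
  have h₂ := qbinom_succ (x + k) k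
  have h₃ := qbinom_succ (x - 1) k
  have h₄ := qbinom_succ_eq_mul_qbinom_sub_one (x + k + 1) k
  rw [add_sub_cancel_right] at h₄
  simp only [qPoly, pPoly, Nat.cast_succ]
  rw [show x + (k + 1) - 1 = x + k by ring, ← add_assoc, h₁, h₂, h₃, h₄, add_sub_cancel_right]
  field_simp
  ring

def shiftedQPoly (s j : ℕ) (x : ℚ) : ℚ := qbinom (x - s) j * qbinom (x + j - 1) j

lemma shiftedQPoly_zero_left (k : ℕ) : shiftedQPoly 0 k = qPoly k := by
  funext x
  rw [shiftedQPoly, qPoly, Nat.cast_zero, sub_zero]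

lemma shiftedQPoly_zero_right (s : ℕ) (x : ℚ) : shiftedQPoly s 0 x = 1 := by
  simp [shiftedQPoly, qbinom_zero_right]

lemma shiftedQPoly_succ_zero (s j : ℕ) : shiftedQPoly s (j + 1) 0 = 0 := by
  rw [shiftedQPoly, Nat.cast_succ, zero_add, add_sub_cancel_right,
    qbinom_natCast_of_lt j.lt_succ_self, mul_zero]

lemma shiftedQPoly_succ_sub_shiftedQPoly_sub_one (s j : ℕ) (x : ℚ) :
    shiftedQPoly s (j + 1) x - shiftedQPoly s (j + 1) (x - 1) =
      (2 * x - s - 1) / (j + 1) * shiftedQPoly (s + 1) j x := by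
  have h₁ := qbinom_succ_eq_mul_qbinom_sub_one (x - s) j
  have h₂ := qbinom_succ_eq_mul_qbinom_sub_one (x + j) j
  have h₃ := qbinom_succ (x - s - 1) j
  have h₄ := qbinom_succ (x + j - 1) j
  simp only [shiftedQPoly, Nat.cast_succ]
  rw [show x + (j + 1) - 1 = x + j by ring, show x - 1 - s = x - s - 1 by ring,
    show x - 1 + (j + 1) - 1 = x + j - 1 by ring, show x - (s + 1) = x - s - 1 by ring,
    h₁, h₂, h₃, h₄, show x + j - 1 - j = x - 1 by ring]
  field_simp
  ring

lemma sub_two_mul_mul_choose_succ (n r : ℕ) :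
    ((n + 1 : ℚ) - 2 * (r + 1)) * (n + 1).choose (r + 1) =
      (n + 1) * ((n.choose (r + 1) : ℚ) - n.choose r) := by
  have hpascal : ((n + 1).choose (r + 1) : ℚ) = n.choose r + n.choose (r + 1) := by
    exact_mod_cast Nat.choose_succ_succ' n r
  have habsorb : ((n + 1) * n.choose r : ℚ) = (n + 1).choose (r + 1) * (r + 1) := by
    exact_mod_cast Nat.add_one_mul_choose_eq n r
  linear_combination (n + 1 : ℚ) * hpascal + 2 * habsorb

lemma sum_range_sub_two_mul_mul_choose (n ℓ : ℕ) (g : ℕ → ℚ) :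
    ∑ r ∈ range (ℓ + 1), ((n + 1 : ℚ) - 2 * r) * (n + 1).choose r * g r =
      (n + 1) * (∑ r ∈ range (ℓ + 1), n.choose r * (g r - g (r + 1)) +
        n.choose ℓ * g (ℓ + 1)) := by
  induction ℓ with
  | zero =>
    simp only [zero_add, sum_range_one, Nat.choose_zero_right]
    push_cast
    ring
  | succ ℓ ih =>
    rw [sum_range_succ _ (ℓ + 1), ih, sum_range_succ _ (ℓ + 1)]
    push_cast
    linear_combination g (ℓ + 1) * sub_two_mul_mul_choose_succ n ℓ

lemma sum_Icc_one_eq_sum_range_sub {M : Type*} [AddCommMonoid M] (ℓ : ℕ) (h : ℕ → M) :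
    ∑ m ∈ Icc 1 ℓ, h m = ∑ r ∈ range ℓ, h (ℓ - r) := by
  refine sum_nbij' (ℓ - ·) (ℓ - ·) ?_ ?_ ?_ ?_ ?_ <;> intro m hm <;>
    simp only [mem_Icc, mem_range] at hm ⊢
  all_goals try omega
  rw [Nat.sub_sub_self hm.2]

lemma sum_Icc_mul_choose_by_parts {ℓ s n : ℕ} (hsn : s + n + 1 = 2 * ℓ) (f : ℚ → ℚ) :
    ∑ m ∈ Icc 1 ℓ, (2 * m - s : ℚ) * (n + 1).choose (ℓ - m) * f m =
      (n + 1) * (∑ m ∈ Icc 1 ℓ, n.choose (ℓ - m) * (f m - f (m - 1)) +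
        n.choose (ℓ - 1) * f 0) := by
  obtain ⟨L, rfl⟩ : ∃ L, ℓ = L + 1 := ⟨ℓ - 1, by omega⟩
  -- reindex by `r = ℓ - m`, under which the weight `2m - s` becomes `n + 1 - 2r`
  have key := sum_range_sub_two_mul_mul_choose n L (fun r => f ((L + 1 - r : ℕ) : ℚ))
  simp only [sum_Icc_one_eq_sum_range_sub, Nat.add_sub_cancel]
  refine (sum_congr rfl fun r hrL => ?_).trans (key.trans ?_)
  · have hr : r ≤ L + 1 := (mem_range.mp hrL).le
    have hsn' : (s + n + 1 : ℚ) = 2 * (L + 1) := by exact_mod_cast hsn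
    rw [Nat.sub_sub_self hr]
    push_cast [hr]
    linear_combination (-(n + 1).choose r * f (L + 1 - r)) * hsn'
  · rw [Nat.sub_self, Nat.cast_zero]
    congr 2
    refine sum_congr rfl fun r hrL => ?_
    have hr : r < L + 1 := mem_range.mp hrL
    rw [Nat.sub_sub_self hr.le, Nat.cast_sub (by omega : r + 1 ≤ L + 1), Nat.cast_sub hr.le]
    push_cast
    rw [sub_add_eq_sub_sub]

lemma sum_mul_choose_mul_shiftedQPoly {ℓ s n j : ℕ} (hsn : s + n + 1 = 2 * ℓ) (hj : j ≤ n) :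
    ∑ m ∈ Icc 1 ℓ, (2 * m - s : ℚ) * (n + 1).choose (ℓ - m) * shiftedQPoly s j m =
      (n + 1) * n.choose j * (n - j).choose (ℓ - 1) := by
  induction j generalizing s n with
  | zero =>
    simpa [shiftedQPoly_zero_right] using sum_Icc_mul_choose_by_parts hsn fun _ => 1
  | succ j ih =>
    obtain ⟨n, rfl⟩ : ∃ n', n = n' + 1 := ⟨n - 1, by omega⟩
    have hdiff : ∀ m ∈ Icc 1 ℓ,
        ((n + 1).choose (ℓ - m) : ℚ) *
            (shiftedQPoly s (j + 1) m - shiftedQPoly s (j + 1) (m - 1)) =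
          (2 * m - (s + 1 : ℕ) : ℚ) * (n + 1).choose (ℓ - m) * shiftedQPoly (s + 1) j m /
            (j + 1) := by
      intro m _
      rw [shiftedQPoly_succ_sub_shiftedQPoly_sub_one]
      push_cast
      ring
    have habsorb : ((n + 1) * n.choose j : ℚ) = (n + 1).choose (j + 1) * (j + 1) := by
      exact_mod_cast Nat.add_one_mul_choose_eq n j
    rw [sum_Icc_mul_choose_by_parts hsn, shiftedQPoly_succ_zero, sum_congr rfl hdiff, ← sum_div,
      ih (by omega) (by omega), Nat.add_sub_add_right]
    push_cast
    rw [mul_zero, add_zero, habsorb, mul_right_comm, mul_div_cancel_right₀ _ (by positivity),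
      mul_assoc]

lemma choose_mul_choose_sub_eq {n ℓ k : ℕ} (hn : n + 1 = 2 * ℓ) (hk : k ≤ ℓ) :
    n.choose k * (n - k).choose (ℓ - 1) = ℓ.choose k * n.choose ℓ := by
  rw [mul_comm (ℓ.choose k), Nat.choose_mul hk,
    Nat.choose_symm_of_eq_add (by omega : n - k = (ℓ - k) + (ℓ - 1))]

def ballotSum (ℓ : ℕ) (f : ℚ → ℚ) : ℚ :=
  ∑ m ∈ Icc 1 ℓ, ((m : ℚ) / ℓ) * (2 * ℓ).choose (ℓ - m) * f m

lemma ballotSum_sub (ℓ : ℕ) (f g : ℚ → ℚ) :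
    ballotSum ℓ (fun x => f x - g x) = ballotSum ℓ f - ballotSum ℓ g := by
  simp only [ballotSum, mul_sub, sum_sub_distrib]

lemma ballotSum_qPoly {ℓ : ℕ} (hℓ : 1 ≤ ℓ) (k : ℕ) :
    ballotSum ℓ (qPoly k) = ℓ.choose k * (2 * ℓ - 1).choose ℓ := by
  rcases le_or_gt k ℓ with hk | hk
  · obtain ⟨n, hn⟩ : ∃ n, n + 1 = 2 * ℓ := ⟨2 * ℓ - 1, by omega⟩
    have hsum := sum_mul_choose_mul_shiftedQPoly (j := k) (s := 0) (by omega : 0 + n + 1 = 2 * ℓ)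
      (by omega)
    simp only [shiftedQPoly_zero_left, Nat.cast_zero, sub_zero] at hsum
    have hchoose : (n.choose k * (n - k).choose (ℓ - 1) : ℚ) = ℓ.choose k * n.choose ℓ := by
      exact_mod_cast choose_mul_choose_sub_eq hn hk
    have hn' : (n + 1 : ℚ) = 2 * ℓ := by exact_mod_cast hn
    calc ballotSum ℓ (qPoly k)
        = (∑ m ∈ Icc 1 ℓ, (2 * m : ℚ) * (n + 1).choose (ℓ - m) * qPoly k m) / (n + 1) := by
          rw [ballotSum, sum_div, ← hn]
          refine sum_congr rfl fun m _ => ?_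
          rw [hn']
          field_simp
      _ = ℓ.choose k * (2 * ℓ - 1).choose ℓ := by
          rw [hsum, ← hn, Nat.add_sub_cancel, mul_assoc, ← hchoose,
            mul_div_cancel_left₀ _ (by positivity)]
  · have hzero : ∀ m ∈ Icc 1 ℓ, qPoly k m = 0 := fun m hm => by
      rw [qPoly, qbinom_natCast_of_lt (by simp only [mem_Icc] at hm; omega), zero_mul]
    rw [ballotSum, sum_eq_zero fun m hm => by rw [hzero m hm, mul_zero],
      Nat.choose_eq_zero_of_lt hk, Nat.cast_zero, zero_mul]

lemma ballotSum_pPoly {ℓ : ℕ} (hℓ : 1 ≤ ℓ) (k : ℕ) :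
    ballotSum ℓ (pPoly k) = (ℓ - 1).choose k * (2 * ℓ - 1).choose ℓ := by
  obtain ⟨L, rfl⟩ : ∃ L, ℓ = L + 1 := ⟨ℓ - 1, by omega⟩
  induction k with
  | zero => simp only [pPoly_zero, ballotSum_qPoly hℓ, Nat.choose_zero_right]
  | succ k ih =>
    have hp : pPoly (k + 1) = fun x => qPoly (k + 1) x - pPoly k x := by
      funext x
      rw [qPoly_succ, add_sub_cancel_right]
    rw [hp, ballotSum_sub, ballotSum_qPoly hℓ, ih, Nat.choose_succ_succ']
    push_cast
    ring

/-- Lemma 3.1 (hypergeometric identities):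
`Σ_{m=1}^{ℓ} (m/ℓ)·C(2ℓ,ℓ-m)·p_k(m) = C(ℓ-1,k)·C(2ℓ-1,ℓ)` and
`Σ_{m=1}^{ℓ} (m/ℓ)·C(2ℓ,ℓ-m)·q_k(m) = C(ℓ,k)·C(2ℓ-1,ℓ)`. -/
theorem stmt6 (ℓ k : ℕ) (hl : 1 ≤ ℓ) :
    (∑ m ∈ Finset.Icc 1 ℓ,
        ((m : ℚ) / (ℓ : ℚ)) * (Nat.choose (2 * ℓ) (ℓ - m) : ℚ) * pPoly k (m : ℚ) =
      (Nat.choose (ℓ - 1) k : ℚ) * (Nat.choose (2 * ℓ - 1) ℓ : ℚ)) ∧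
    (∑ m ∈ Finset.Icc 1 ℓ,
        ((m : ℚ) / (ℓ : ℚ)) * (Nat.choose (2 * ℓ) (ℓ - m) : ℚ) * qPoly k (m : ℚ) =
      (Nat.choose ℓ k : ℚ) * (Nat.choose (2 * ℓ - 1) ℓ : ℚ)) :=
  ⟨ballotSum_pPoly hl k, ballotSum_qPoly hl k⟩
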